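/- arXiv:2404.07994 — 3 statements merged into one kernel-verified Lean document; each statement's English description precedes it below -/
import Mathlib

section
/- For α, β ∈ [0,1] with α ≠ β, the (α,β)-order ⪯_{(α,β)} on closed subintervals of [0,1], defined by x ⪯_{(α,β)} z iff K_α(x) < K_α(z) or (K_α(x) = K_α(z) and K_β(x) ≤ K_β(z)), where K_γ([a,b]) = (1-γ)a + γb, is a total order that refines the interval order ≤_iv (i.e., is an admissible order with respect to ≤_iv). -/
/-- A subinterval `[a,b]` of `[0,1]`, as a pair of reals. -/
def IsI01 (p : ℝ × ℝ) : Prop := 0 ≤ p.1 ∧ p.1 ≤ p.2 ∧ p.2 ≤ 1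

/-- `K_γ([a,b]) = (1-γ)a + γb`. -/
def Kmap (γ : ℝ) (p : ℝ × ℝ) : ℝ := (1 - γ) * p.1 + γ * p.2

/-- The `(α,β)`-order. -/
def preAB (α β : ℝ) (x z : ℝ × ℝ) : Prop :=
  Kmap α x < Kmap α z ∨ (Kmap α x = Kmap α z ∧ Kmap β x ≤ Kmap β z)

/-- The interval (product) order on pairs. -/
def leIv' (x z : ℝ × ℝ) : Prop := x.1 ≤ z.1 ∧ x.2 ≤ z.2

/-!
The `(α,β)`-order is the pullback of the lexicographic order on `ℝ ×ₗ ℝ` along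
`x ↦ (K_α x, K_β x)`, so it is a total preorder. For `α ≠ β` this map is injective
(`K_α - K_β = (β - α)(a - b)` recovers the width `b - a`, and then `K_α` recovers `a`),
so the preorder is antisymmetric. For `γ ∈ [0,1]`, `K_γ` is monotone for the product
order, and the product order of `ℝ × ℝ` is finer than the lexicographic one.
-/

def lexKmap (α β : ℝ) (x : ℝ × ℝ) : ℝ ×ₗ ℝ := toLex (Kmap α x, Kmap β x)

theorem preAB_iff_lexKmap_le (α β : ℝ) (x z : ℝ × ℝ) :
    preAB α β x z ↔ lexKmap α β x ≤ lexKmap α β z :=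
  (Prod.Lex.toLex_le_toLex (x := (Kmap α x, Kmap β x)) (y := (Kmap α z, Kmap β z))).symm

theorem lexKmap_injective {α β : ℝ} (hαβ : α ≠ β) : Function.Injective (lexKmap α β) := by
  intro x z h
  obtain ⟨hα, hβ⟩ := Prod.mk.inj (toLex.injective h)
  simp only [Kmap] at hα hβ
  have hwidth : x.2 - x.1 = z.2 - z.1 :=
    mul_left_cancel₀ (sub_ne_zero.2 hαβ) (by linear_combination hα - hβ)
  have hleft : x.1 = z.1 := by linear_combination hα - α * hwidth
  exact Prod.ext hleft (by linarith)

theorem Kmap_monotone {γ : ℝ} (hγ : γ ∈ Set.Icc (0 : ℝ) 1) : Monotone (Kmap γ) := by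
  intro x z ⟨h₁, h₂⟩
  have h₁' : (1 - γ) * x.1 ≤ (1 - γ) * z.1 := mul_le_mul_of_nonneg_left h₁ (by linarith [hγ.2])
  have h₂' : γ * x.2 ≤ γ * z.2 := mul_le_mul_of_nonneg_left h₂ hγ.1
  exact add_le_add h₁' h₂'

theorem lexKmap_monotone {α β : ℝ} (hα : α ∈ Set.Icc (0 : ℝ) 1) (hβ : β ∈ Set.Icc (0 : ℝ) 1) :
    Monotone (lexKmap α β) := fun _ _ h ↦
  Prod.Lex.toLex_mono (Prod.mk_le_mk.2 ⟨Kmap_monotone hα h, Kmap_monotone hβ h⟩)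

/-- for `α ≠ β` in `[0,1]`, the `(α,β)`-order is a total order on
subintervals of `[0,1]` refining the interval order. -/
theorem stmt_6 (α β : ℝ) (hα : α ∈ Set.Icc (0:ℝ) 1) (hβ : β ∈ Set.Icc (0:ℝ) 1)
    (hαβ : α ≠ β) :
    (∀ x, IsI01 x → preAB α β x x) ∧
    (∀ x z, IsI01 x → IsI01 z → preAB α β x z → preAB α β z x → x = z) ∧
    (∀ x y z, IsI01 x → IsI01 y → IsI01 z →
      preAB α β x y → preAB α β y z → preAB α β x z) ∧
    (∀ x z, IsI01 x → IsI01 z → preAB α β x z ∨ preAB α β z x) ∧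
    (∀ x z, IsI01 x → IsI01 z → leIv' x z → preAB α β x z) := by
  simp only [preAB_iff_lexKmap_le]
  refine ⟨fun x _ ↦ le_rfl, ?_, ?_, ?_, ?_⟩
  · exact fun x z _ _ hxz hzx ↦ lexKmap_injective hαβ (le_antisymm hxz hzx)
  · exact fun x y z _ _ _ ↦ le_trans
  · exact fun x z _ _ ↦ le_total _ _
  · exact fun x z _ _ h ↦ lexKmap_monotone hα hβ h
end

section
/- Let δ : [0,1]² → [0,1] be a real-valued dissimilarity function. The 'chain additivity' condition δ(b₁,c) + δ(c,b₂) = δ(b₁,d) + δ(d,b₂) for all b₂ ≤ c ≤ b₁ and b₂ ≤ d ≤ b₁ is equivalent to the condition δ(b,d) = δ(b,0) − δ(d,0) for all d ≤ b. -/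
/-!
Comparing the chains `b ≥ d ≥ 0` and `b ≥ 0 ≥ 0`, and using `δ(0,0) = 0`, chain additivity gives
`δ(b,d) + δ(d,0) = δ(b,0)`: `δ` is the difference of the potential `φ = δ(·,0)`. Conversely, under that potential form every
chain sum `δ(b₁,c) + δ(c,b₂)` telescopes to `φ(b₁) - φ(b₂)`, which does not depend on `c`.
-/

namespace Dissimilarity

variable {α β : Type*} [Preorder α] [AddCommGroup β]

def ChainAdditiveOn (δ : α → α → β) (s : Set α) : Prop :=
  ∀ b₁ b₂ c d, b₁ ∈ s → b₂ ∈ s → b₂ ≤ c → c ≤ b₁ → b₂ ≤ d → d ≤ b₁ →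
    δ b₁ c + δ c b₂ = δ b₁ d + δ d b₂

theorem ChainAdditiveOn.eq_sub_of_le {δ : α → α → β} {s : Set α} (hδ : ChainAdditiveOn δ s)
    {o b d : α} (hoo : δ o o = 0) (hb : b ∈ s) (ho : o ∈ s) (hod : o ≤ d) (hdb : d ≤ b) :
    δ b d = δ b o - δ d o := by
  have hsplit := hδ b o d o hb ho hod hdb le_rfl (hod.trans hdb)
  rw [hoo, add_zero] at hsplit
  exact eq_sub_of_add_eq hsplit

theorem add_eq_sub_of_eq_sub {δ : α → α → β} {s : Set α} [s.OrdConnected] {f : α → β}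
    (hf : ∀ b ∈ s, ∀ d ∈ s, d ≤ b → δ b d = f b - f d)
    {b₁ b₂ c : α} (hb₁ : b₁ ∈ s) (hb₂ : b₂ ∈ s) (hb₂c : b₂ ≤ c) (hcb₁ : c ≤ b₁) :
    δ b₁ c + δ c b₂ = f b₁ - f b₂ := by
  have hc : c ∈ s := s.Icc_subset hb₂ hb₁ ⟨hb₂c, hcb₁⟩
  rw [hf b₁ hb₁ c hc hcb₁, hf c hc b₂ hb₂ hb₂c]
  abel

theorem chainAdditiveOn_of_eq_sub {δ : α → α → β} {s : Set α} [s.OrdConnected] {f : α → β}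
    (hf : ∀ b ∈ s, ∀ d ∈ s, d ≤ b → δ b d = f b - f d) : ChainAdditiveOn δ s :=
  fun _ _ _ _ hb₁ hb₂ hb₂c hcb₁ hb₂d hdb₁ => by
    rw [add_eq_sub_of_eq_sub hf hb₁ hb₂ hb₂c hcb₁, add_eq_sub_of_eq_sub hf hb₁ hb₂ hb₂d hdb₁]

end Dissimilarity

open Dissimilarity in
theorem stmt_9_general (δ : ℝ → ℝ → ℝ)
    (hdiag : ∀ x ∈ Set.Icc (0:ℝ) 1, δ x x = 0) :
    (∀ b₁ b₂ c d, b₁ ∈ Set.Icc (0:ℝ) 1 → b₂ ∈ Set.Icc (0:ℝ) 1 →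
      b₂ ≤ c → c ≤ b₁ → b₂ ≤ d → d ≤ b₁ →
      δ b₁ c + δ c b₂ = δ b₁ d + δ d b₂) ↔
    (∀ b d, b ∈ Set.Icc (0:ℝ) 1 → d ∈ Set.Icc (0:ℝ) 1 → d ≤ b →
      δ b d = δ b 0 - δ d 0) := by
  have h0 : (0 : ℝ) ∈ Set.Icc (0 : ℝ) 1 := Set.left_mem_Icc.mpr zero_le_one
  refine ⟨fun hchain b d hb hd hdb => ?_, fun hpot => ?_⟩
  · exact ChainAdditiveOn.eq_sub_of_le hchain (hdiag 0 h0) hb h0 hd.1 hdb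
  · exact chainAdditiveOn_of_eq_sub fun b hb d hd hdb => hpot b d hb hd hdb

/-- for a real-valued dissimilarity function δ on [0,1], chain
additivity δ(b₁,c) + δ(c,b₂) = δ(b₁,d) + δ(d,b₂) for all b₂ ≤ c,d ≤ b₁ is
equivalent to δ(b,d) = δ(b,0) − δ(d,0) for all d ≤ b. -/
theorem stmt_9 (δ : ℝ → ℝ → ℝ)
    (hrange : ∀ x ∈ Set.Icc (0:ℝ) 1, ∀ y ∈ Set.Icc (0:ℝ) 1, δ x y ∈ Set.Icc (0:ℝ) 1)
    (hsymm : ∀ x ∈ Set.Icc (0:ℝ) 1, ∀ y ∈ Set.Icc (0:ℝ) 1, δ x y = δ y x)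
    (hzeroone : δ 0 1 = 1)
    (hdiag : ∀ x ∈ Set.Icc (0:ℝ) 1, δ x x = 0)
    (hmono : ∀ x y z, x ∈ Set.Icc (0:ℝ) 1 → y ∈ Set.Icc (0:ℝ) 1 → z ∈ Set.Icc (0:ℝ) 1 →
      x ≤ y → y ≤ z → δ x y ≤ δ x z ∧ δ y z ≤ δ x z) :
    (∀ b₁ b₂ c d, b₁ ∈ Set.Icc (0:ℝ) 1 → b₂ ∈ Set.Icc (0:ℝ) 1 →
      b₂ ≤ c → c ≤ b₁ → b₂ ≤ d → d ≤ b₁ →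
      δ b₁ c + δ c b₂ = δ b₁ d + δ d b₂) ↔
    (∀ b d, b ∈ Set.Icc (0:ℝ) 1 → d ∈ Set.Icc (0:ℝ) 1 → d ≤ b →
      δ b d = δ b 0 - δ d 0) :=
  stmt_9_general δ hdiag
end

section
/- Let ⪯ be a total order on intervals of [0,1] refining the interval order, compatible with scalar multiplication c ⊙_iv [a,b] = [ca, cb] (x ⪯ y implies c ⊙_iv x ⪯ c ⊙_iv y for c ∈ [0,1]), and whose strict part is compatible with interval addition ⊕_iv. Suppose b₁, b₂ ∈ [0,1] with b₂ ≤ b₁ and intervals u₁ ⪯ u₂, v₁ ⪯ v₂ with u₁ ⊕_iv v₂ = u₂ ⊕_iv v₁ a subinterval of [0,1]. Then for the (α,β)-order (α≠β, α,β ∈ [0,1]): (b₁ ⊙_iv u₁) ⊕_iv (b₂ ⊙_iv v₂) ⪯ (b₁ ⊙_iv u₂) ⊕_iv (b₂ ⊙_iv v₁). -/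
/-- Interval addition: add the endpoints. -/
def addIv (x z : ℝ × ℝ) : ℝ × ℝ := (x.1 + z.1, x.2 + z.2)

/-- Interval scalar multiplication `c ⊙ [a,b] = [ca,cb]`. -/
def smulIv (c : ℝ) (x : ℝ × ℝ) : ℝ × ℝ := (c * x.1, c * x.2)

theorem Kmap_addIv (γ : ℝ) (x y : ℝ × ℝ) : Kmap γ (addIv x y) = Kmap γ x + Kmap γ y := by
  simp only [Kmap, addIv]
  ring

theorem Kmap_smulIv (γ c : ℝ) (x : ℝ × ℝ) : Kmap γ (smulIv c x) = c * Kmap γ x := by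
  simp only [Kmap, smulIv]
  ring

theorem addIv_smulIv_smulIv (b₁ b₂ : ℝ) (x y : ℝ × ℝ) :
    addIv (smulIv b₁ x) (smulIv b₂ y) = addIv (smulIv (b₁ - b₂) x) (smulIv b₂ (addIv x y)) := by
  simp only [addIv, smulIv, Prod.mk.injEq]
  constructor <;> ring

theorem preAB_addIv_right_iff (α β : ℝ) (x z w : ℝ × ℝ) :
    preAB α β (addIv x w) (addIv z w) ↔ preAB α β x z := by
  simp only [preAB, Kmap_addIv, add_lt_add_iff_right, add_left_inj, add_le_add_iff_right]

theorem preAB.smulIv {α β c : ℝ} {x z : ℝ × ℝ} (hc : 0 ≤ c) (h : preAB α β x z) :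
    preAB α β (smulIv c x) (smulIv c z) := by
  simp only [preAB, Kmap_smulIv]
  rcases hc.eq_or_lt with rfl | hc
  · simp
  rcases h with hlt | ⟨heq, hle⟩
  · exact Or.inl (mul_lt_mul_of_pos_left hlt hc)
  · exact Or.inr ⟨by rw [heq], mul_le_mul_of_nonneg_left hle hc.le⟩

theorem stmt_16_general (α β : ℝ)
    (b₁ b₂ : ℝ)
    (hb : b₂ ≤ b₁)
    (u₁ u₂ v₁ v₂ : ℝ × ℝ)
    (hu : preAB α β u₁ u₂)
    (hcross : addIv u₁ v₂ = addIv u₂ v₁) :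
    preAB α β (addIv (smulIv b₁ u₁) (smulIv b₂ v₂))
      (addIv (smulIv b₁ u₂) (smulIv b₂ v₁)) := by
  rw [addIv_smulIv_smulIv b₁ b₂ u₁, addIv_smulIv_smulIv b₁ b₂ u₂, ← hcross,
    preAB_addIv_right_iff]
  exact hu.smulIv (sub_nonneg.mpr hb)

/-- condition (C1) for the `(α,β)`-order: if b₂ ≤ b₁, u₁ ⪯ u₂,
v₁ ⪯ v₂ and u₁ ⊕ v₂ = u₂ ⊕ v₁ is a subinterval of [0,1], then
(b₁ ⊙ u₁) ⊕ (b₂ ⊙ v₂) ⪯ (b₁ ⊙ u₂) ⊕ (b₂ ⊙ v₁). -/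
theorem stmt_16 (α β : ℝ) (hα : α ∈ Set.Icc (0:ℝ) 1) (hβ : β ∈ Set.Icc (0:ℝ) 1)
    (hαβ : α ≠ β)
    (b₁ b₂ : ℝ) (hb₁ : b₁ ∈ Set.Icc (0:ℝ) 1) (hb₂ : b₂ ∈ Set.Icc (0:ℝ) 1)
    (hb : b₂ ≤ b₁)
    (u₁ u₂ v₁ v₂ : ℝ × ℝ)
    (hu₁ : IsI01 u₁) (hu₂ : IsI01 u₂) (hv₁ : IsI01 v₁) (hv₂ : IsI01 v₂)
    (hu : preAB α β u₁ u₂) (hv : preAB α β v₁ v₂)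
    (hcross : addIv u₁ v₂ = addIv u₂ v₁) (hmem : IsI01 (addIv u₁ v₂)) :
    preAB α β (addIv (smulIv b₁ u₁) (smulIv b₂ v₂))
      (addIv (smulIv b₁ u₂) (smulIv b₂ v₁)) :=
  stmt_16_general α β b₁ b₂ hb u₁ u₂ v₁ v₂ hu hcross
end
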